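/- If m is even and the spectral radius of E[F₀^[m]] is less than one, then the system Σ_μ is exponentially mth mean stable. -/

import Mathlib

open scoped BigOperators
open MeasureTheory ProbabilityTheory
open scoped Matrix.Norms.L2Operator

noncomputable section

open scoped BigOperators

/-- The multi-indices `α : Fin n → ℕ` with `∑ α i = m` form a finite type. -/
instance multiIdxFintype (n m : ℕ) : Fintype {α : Fin n → ℕ // ∑ i, α i = m} :=
  Fintype.subtype (Finset.Nat.antidiagonalTuple n m) fun _ =>
    Finset.Nat.mem_antidiagonalTuple

/-- The `m`-lift `x^[m]` of a vector `x ∈ ℝⁿ`: the entry indexed by the multi-index `α`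
is `√(m!/(α₁!⋯αₙ!)) · x₁^{α₁} ⋯ xₙ^{αₙ}`. -/
def mLift (n m : ℕ) (x : Fin n → ℝ) : {α : Fin n → ℕ // ∑ i, α i = m} → ℝ :=
  fun α => Real.sqrt (Nat.multinomial Finset.univ α.1) * ∏ i, x i ^ α.1 i

/-- `L` is the `m`-lift `A^[m]` of the matrix `A`, i.e. `(Ax)^[m] = L x^[m]` for all `x`. -/
def IsMatrixLift (n m : ℕ) (A : Matrix (Fin n) (Fin n) ℝ)
    (L : Matrix {α : Fin n → ℕ // ∑ i, α i = m} {α : Fin n → ℕ // ∑ i, α i = m} ℝ) : Prop :=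
  ∀ x : Fin n → ℝ, mLift n m (A.mulVec x) = L.mulVec (mLift n m x)

/-- The Euclidean norm of a vector in `ℝⁿ`. -/
def euclNorm {n : ℕ} (x : Fin n → ℝ) : ℝ := Real.sqrt (∑ i, x i ^ 2)

/-- The spectral radius of a real square matrix: the supremum of the absolute values of its
complex eigenvalues. -/
def specRad {N : Type*} [Fintype N] [DecidableEq N] (M : Matrix N N ℝ) : ENNReal :=
  spectralRadius ℂ (M.map (algebraMap ℝ ℂ))

/-- The (Borel product) measurable structure on matrices, entrywise. -/
instance matrixMeasurableSpace {m n α : Type*} [MeasurableSpace α] :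
    MeasurableSpace (Matrix m n α) :=
  (inferInstance : MeasurableSpace (m → n → α))

/-- `prodSeq F k ω = F_{k-1}(ω) ⋯ F_1(ω) F_0(ω)` (the empty product for `k = 0`). -/
def prodSeq {Ω : Type*} {n : ℕ} (F : ℕ → Ω → Matrix (Fin n) (Fin n) ℝ) :
    ℕ → Ω → Matrix (Fin n) (Fin n) ℝ
  | 0 => fun _ => 1
  | k + 1 => fun ω => F k ω * prodSeq F k ω

/-- The state `x_d(k) = F_{k-1} ⋯ F_1 F_0 x₀` of the system `Σ_μ`. -/
def xd {Ω : Type*} {n : ℕ} (F : ℕ → Ω → Matrix (Fin n) (Fin n) ℝ)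
    (x₀ : Fin n → ℝ) (k : ℕ) (ω : Ω) : Fin n → ℝ :=
  (prodSeq F k ω).mulVec x₀

/-- Entrywise expectation of a random matrix. -/
def matExpVal {Ω : Type*} [MeasurableSpace Ω] (P : Measure Ω) {N : Type*}
    (M : Ω → Matrix N N ℝ) : Matrix N N ℝ :=
  Matrix.of fun i j => ∫ ω, M ω i j ∂P

/-- Exponential `m`th mean stability of `Σ_μ`. -/
def ExpMeanStable {Ω : Type*} [MeasurableSpace Ω] (P : Measure Ω) {n : ℕ}
    (F : ℕ → Ω → Matrix (Fin n) (Fin n) ℝ) (m : ℕ) : Prop :=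
  ∃ a : ℝ, 0 < a ∧ ∃ b : ℝ, 0 < b ∧ ∀ x₀ : Fin n → ℝ, ∀ k : ℕ,
    (∫ ω, euclNorm (xd F x₀ k ω) ^ m ∂P) ≤ a * Real.exp (-b * k) * euclNorm x₀ ^ m

/-- Stochastic `m`th mean stability of `Σ_μ`. -/
def StochMeanStable {Ω : Type*} [MeasurableSpace Ω] (P : Measure Ω) {n : ℕ}
    (F : ℕ → Ω → Matrix (Fin n) (Fin n) ℝ) (m : ℕ) : Prop :=
  ∀ x₀ : Fin n → ℝ, Summable fun k => ∫ ω, euclNorm (xd F x₀ k ω) ^ m ∂P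

/-- Positivity of the system `Σ_μ`. -/
def PositiveSys {Ω : Type*} [MeasurableSpace Ω] (P : Measure Ω) {n : ℕ}
    (F : ℕ → Ω → Matrix (Fin n) (Fin n) ℝ) : Prop :=
  ∀ x₀ : Fin n → ℝ, (∀ i, 0 ≤ x₀ i) → ∀ k : ℕ, ∀ᵐ ω ∂P, ∀ i, 0 ≤ xd F x₀ k ω i

/-!
For even `m`, `‖x‖^m = (∑ xᵢ²)^(m/2)` is a homogeneous polynomial of degree `m`, hence a fixed
linear functional `w` of the lift `x^[m]`. Lifting is multiplicative, `(A x)^[m] = A^[m] x^[m]`,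
and `F_k` is independent of `x_d(k)`, so `E[x_d(k)^[m]] = M^k x₀^[m]` with `M = E[F₀^[m]]`.
By Gelfand's formula the entries of `M^k` are `O(r^k)` for any `r` between the spectral radius
of `M` and `1`, while the entries of `x₀^[m]` are `O(‖x₀‖^m)`; thus
`E‖x_d(k)‖^m = w ⬝ (M^k x₀^[m]) = O(r^k ‖x₀‖^m)`.
-/

open Matrix

abbrev MultiIdx (n m : ℕ) := {α : Fin n → ℕ // ∑ i, α i = m}

namespace MultiIdx

variable {n m : ℕ}

def toFinsupp (α : MultiIdx n m) : Fin n →₀ ℕ := Finsupp.equivFunOnFinite.symm α.1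

@[simp]
lemma toFinsupp_apply (α : MultiIdx n m) (i : Fin n) : α.toFinsupp i = α.1 i := rfl

lemma toFinsupp_injective : Function.Injective (toFinsupp (n := n) (m := m)) :=
  fun _ _ h => Subtype.ext (Finsupp.equivFunOnFinite.symm.injective h)

lemma sqrt_multinomial_pos (α : MultiIdx n m) : 0 < √(Nat.multinomial Finset.univ α.1 : ℝ) :=
  Real.sqrt_pos.2 (by exact_mod_cast Nat.multinomial_pos _ _)

end MultiIdx

section Lift

open MvPolynomial

variable {n m : ℕ}

def liftCoeff (m : ℕ) (p : MvPolynomial (Fin n) ℝ) : MultiIdx n m → ℝ :=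
  fun α => coeff α.toFinsupp p / √(Nat.multinomial Finset.univ α.1 : ℝ)

lemma liftCoeff_mul_mLift (p : MvPolynomial (Fin n) ℝ) (x : Fin n → ℝ) (α : MultiIdx n m) :
    liftCoeff m p α * mLift n m x α = coeff α.toFinsupp p * ∏ i, x i ^ α.1 i := by
  rw [liftCoeff, mLift]
  field_simp [(MultiIdx.sqrt_multinomial_pos α).ne']

theorem MvPolynomial.IsHomogeneous.eval_eq_liftCoeff_dotProduct {p : MvPolynomial (Fin n) ℝ}
    (hp : p.IsHomogeneous m) (x : Fin n → ℝ) :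
    eval x p = liftCoeff m p ⬝ᵥ mLift n m x := by
  classical
  have hsupp : p.support ⊆ Finset.univ.image (MultiIdx.toFinsupp (n := n) (m := m)) := by
    intro d hd
    have hdeg : ∑ i, d i = m := by
      simpa [Finsupp.weight_apply, Finsupp.sum_fintype] using hp (mem_support_iff.mp hd)
    exact Finset.mem_image.mpr ⟨⟨d, hdeg⟩, Finset.mem_univ _, Finsupp.ext fun _ => rfl⟩
  rw [eval_eq', Finset.sum_subset hsupp fun d _ hd => by rw [notMem_support_iff.mp hd, zero_mul],
    Finset.sum_image fun α _ β _ h => MultiIdx.toFinsupp_injective h, dotProduct]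
  exact Finset.sum_congr rfl fun α _ => (liftCoeff_mul_mLift p x α).symm

theorem eq_zero_of_forall_dotProduct_mLift_eq_zero {v : MultiIdx n m → ℝ}
    (h : ∀ x, v ⬝ᵥ mLift n m x = 0) : v = 0 := by
  classical
  set q : MvPolynomial (Fin n) ℝ := ∑ α : MultiIdx n m,
    monomial α.toFinsupp (v α * √(Nat.multinomial Finset.univ α.1 : ℝ))
  have hq : q = 0 := MvPolynomial.funext fun x => by
    simpa [q, eval_monomial, Finsupp.prod_fintype, dotProduct, mLift, mul_assoc] using h x
  funext γ
  have hcoeff := congrArg (coeff γ.toFinsupp) hq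
  simp only [q, coeff_sum, coeff_monomial, MultiIdx.toFinsupp_injective.eq_iff,
    Finset.sum_ite_eq', Finset.mem_univ, if_true, coeff_zero] at hcoeff
  exact (mul_eq_zero.mp hcoeff).resolve_right (MultiIdx.sqrt_multinomial_pos γ).ne'

theorem span_range_mLift : Submodule.span ℝ (Set.range (mLift n m)) = ⊤ := by
  classical
  by_contra hne
  obtain ⟨f, hf, hspan⟩ :=
    Submodule.exists_dual_map_eq_bot_of_lt_top (lt_top_iff_ne_top.mpr hne) inferInstance
  have hv : (dotProductEquiv ℝ _).symm f = 0 := eq_zero_of_forall_dotProduct_mLift_eq_zero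
    fun x => by
      have hx := Submodule.mem_map_of_mem (f := f)
        (Submodule.subset_span (Set.mem_range_self (f := mLift n m) x))
      rw [hspan, Submodule.mem_bot] at hx
      rw [← dotProductEquiv_apply_apply, LinearEquiv.apply_symm_apply]
      exact hx
  exact hf (by simpa using hv)

def liftPoly (A : Matrix (Fin n) (Fin n) ℝ) (β : MultiIdx n m) : MvPolynomial (Fin n) ℝ :=
  C √(Nat.multinomial Finset.univ β.1 : ℝ) * ∏ i, (∑ j, C (A i j) * X j) ^ β.1 i

lemma liftPoly_isHomogeneous (A : Matrix (Fin n) (Fin n) ℝ) (β : MultiIdx n m) :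
    (liftPoly A β).IsHomogeneous m := by
  have hrow (i : Fin n) : (∑ j, C (A i j) * X j : MvPolynomial (Fin n) ℝ).IsHomogeneous 1 :=
    IsHomogeneous.sum _ _ _ fun j _ => isHomogeneous_C_mul_X _ _
  have hprod := IsHomogeneous.prod Finset.univ _ (fun i => β.1 i)
    fun i _ => by simpa using (hrow i).pow (β.1 i)
  rw [β.2] at hprod
  exact hprod.C_mul _

lemma eval_liftPoly (A : Matrix (Fin n) (Fin n) ℝ) (β : MultiIdx n m) (x : Fin n → ℝ) :
    eval x (liftPoly A β) = mLift n m (A *ᵥ x) β := by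
  simp [liftPoly, mLift, Matrix.mulVec, dotProduct]

def liftMat (A : Matrix (Fin n) (Fin n) ℝ) : Matrix (MultiIdx n m) (MultiIdx n m) ℝ :=
  Matrix.of fun β => liftCoeff m (liftPoly A β)

theorem isMatrixLift_liftMat (A : Matrix (Fin n) (Fin n) ℝ) : IsMatrixLift n m A (liftMat A) :=
  fun x => funext fun β => by
    rw [← eval_liftPoly, (liftPoly_isHomogeneous A β).eval_eq_liftCoeff_dotProduct]
    rfl

lemma mLift_mulVec (A : Matrix (Fin n) (Fin n) ℝ) (x : Fin n → ℝ) :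
    mLift n m (A *ᵥ x) = liftMat A *ᵥ mLift n m x :=
  isMatrixLift_liftMat A x

theorem IsMatrixLift.eq_liftMat {A : Matrix (Fin n) (Fin n) ℝ}
    {L : Matrix (MultiIdx n m) (MultiIdx n m) ℝ} (hL : IsMatrixLift n m A L) :
    L = liftMat A := by
  ext β γ
  have hrow : L β - liftMat A β = 0 := eq_zero_of_forall_dotProduct_mLift_eq_zero fun x => by
    have h := congrFun ((hL x).symm.trans (isMatrixLift_liftMat A x)) β
    rw [sub_dotProduct, sub_eq_zero]
    exact h
  exact sub_eq_zero.mp (congrFun hrow γ)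

theorem exists_euclNorm_pow_eq_dotProduct_mLift (hm : Even m) :
    ∃ w : MultiIdx n m → ℝ, ∀ x, euclNorm x ^ m = w ⬝ᵥ mLift n m x := by
  obtain ⟨t, rfl⟩ := hm
  have hQ : ((∑ i, X i ^ 2) ^ t : MvPolynomial (Fin n) ℝ).IsHomogeneous (t + t) := by
    rw [← two_mul]
    exact (IsHomogeneous.sum _ _ _
      fun i _ => isHomogeneous_X_pow (R := ℝ) i 2).pow t
  refine ⟨liftCoeff (t + t) ((∑ i, X i ^ 2) ^ t), fun x => ?_⟩
  rw [← hQ.eval_eq_liftCoeff_dotProduct, ← two_mul, pow_mul, euclNorm,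
    Real.sq_sqrt (Finset.sum_nonneg fun i _ => sq_nonneg (x i))]
  simp

end Lift

section Norms

variable {n m : ℕ}

lemma euclNorm_nonneg (x : Fin n → ℝ) : 0 ≤ euclNorm x := Real.sqrt_nonneg _

lemma euclNorm_eq_norm_toLp (x : Fin n → ℝ) : euclNorm x = ‖WithLp.toLp 2 x‖ := by
  simp [euclNorm, EuclideanSpace.norm_eq]

lemma abs_le_euclNorm (x : Fin n → ℝ) (i : Fin n) : |x i| ≤ euclNorm x := by
  rw [euclNorm_eq_norm_toLp, ← Real.norm_eq_abs]
  exact PiLp.norm_apply_le (WithLp.toLp 2 x) i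

lemma euclNorm_mulVec_le (A : Matrix (Fin n) (Fin n) ℝ) (x : Fin n → ℝ) :
    euclNorm (A *ᵥ x) ≤ ‖A‖ * euclNorm x := by
  rw [euclNorm_eq_norm_toLp, euclNorm_eq_norm_toLp]
  exact A.l2_opNorm_mulVec (WithLp.toLp 2 x)

lemma abs_mLift_le (x : Fin n → ℝ) (α : MultiIdx n m) :
    |mLift n m x α| ≤ √(Nat.multinomial Finset.univ α.1 : ℝ) * euclNorm x ^ m := by
  have hpow : euclNorm x ^ m = ∏ i, euclNorm x ^ α.1 i := by
    rw [Finset.prod_pow_eq_pow_sum, α.2]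
  rw [mLift, abs_mul, abs_of_nonneg (Real.sqrt_nonneg _), Finset.abs_prod, hpow]
  gcongr with i
  rw [abs_pow]
  exact pow_le_pow_left₀ (abs_nonneg _) (abs_le_euclNorm x i) _

lemma Matrix.norm_apply_le_l2_opNorm {𝕜 ι : Type*} [RCLike 𝕜] [Fintype ι] [DecidableEq ι]
    (A : Matrix ι ι 𝕜) (i j : ι) : ‖A i j‖ ≤ ‖A‖ := by
  have h := A.l2_opNorm_mulVec (EuclideanSpace.single j 1)
  rw [PiLp.norm_single, norm_one, mul_one] at h
  refine le_trans (le_of_eq ?_) ((PiLp.norm_apply_le _ i).trans h)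
  simp [EuclideanSpace.single]

lemma sum_abs_mLift_le (x : Fin n → ℝ) :
    ∑ α : MultiIdx n m, |mLift n m x α|
      ≤ (∑ α : MultiIdx n m, √(Nat.multinomial Finset.univ α.1 : ℝ)) * euclNorm x ^ m := by
  rw [Finset.sum_mul]
  exact Finset.sum_le_sum fun α _ => abs_mLift_le x α

lemma abs_dotProduct_mulVec_le {ι κ : Type*} [Fintype ι] [Fintype κ] (w : ι → ℝ)
    {B : Matrix ι κ ℝ} (u : κ → ℝ) {c : ℝ} (hB : ∀ i j, |B i j| ≤ c) :
    |w ⬝ᵥ (B *ᵥ u)| ≤ (∑ i, |w i|) * c * ∑ j, |u j| := by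
  calc |w ⬝ᵥ (B *ᵥ u)| ≤ ∑ i, |w i| * ∑ j, |B i j| * |u j| := by
        refine (Finset.abs_sum_le_sum_abs _ _).trans (Finset.sum_le_sum fun i _ => ?_)
        rw [abs_mul]
        gcongr
        exact (Finset.abs_sum_le_sum_abs _ _).trans_eq (by simp only [abs_mul])
    _ ≤ ∑ i, |w i| * ∑ j, c * |u j| := by
        gcongr with i _ j
        exact hB i j
    _ = (∑ i, |w i|) * c * ∑ j, |u j| := by
        rw [← Finset.mul_sum, mul_assoc, Finset.sum_mul]

end Norms

section Measurability

variable {β ι κ : Type*} [MeasurableSpace β]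

lemma Matrix.measurable_apply (i : ι) (j : κ) : Measurable fun A : Matrix ι κ ℝ => A i j :=
  (measurable_pi_apply j).comp (measurable_pi_apply i)

lemma Matrix.measurable_of_apply {f : β → Matrix ι κ ℝ}
    (hf : ∀ i j, Measurable fun b => f b i j) : Measurable f :=
  measurable_pi_lambda _ fun i => measurable_pi_lambda _ (hf i)

lemma Measurable.matrix_mulVec [Fintype κ] {f : β → Matrix ι κ ℝ} {g : β → κ → ℝ}
    (hf : Measurable f) (hg : Measurable g) : Measurable fun b => f b *ᵥ g b :=
  measurable_pi_lambda _ fun i => Finset.measurable_sum _ fun j _ =>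
    ((Matrix.measurable_apply i j).comp hf).mul ((measurable_pi_apply j).comp hg)

lemma measurable_mLift {n m : ℕ} : Measurable (mLift n m) := by
  unfold mLift
  fun_prop

end Measurability

section LiftBounds

variable {n m : ℕ}

lemma exists_liftMat_apply_eq_sum (γ : MultiIdx n m) :
    ∃ c : (Fin n → ℝ) →₀ ℝ, ∀ A β,
      liftMat A β γ = c.sum fun z a => a * mLift n m (A *ᵥ z) β := by
  classical
  obtain ⟨c, hc⟩ := Finsupp.mem_span_range_iff_exists_finsupp.mp
    (span_range_mLift.symm ▸ Submodule.mem_top : Pi.single γ (1 : ℝ) ∈ _)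
  refine ⟨c, fun A β => ?_⟩
  have hcol : liftMat A β γ = (liftMat A *ᵥ Pi.single γ 1) β := by simp
  rw [hcol, ← hc, Finsupp.sum, Matrix.mulVec_sum, Finset.sum_apply, Finsupp.sum]
  refine Finset.sum_congr rfl fun z _ => ?_
  rw [Matrix.mulVec_smul, ← mLift_mulVec, Pi.smul_apply, smul_eq_mul]

lemma measurable_liftMat : Measurable (liftMat (n := n) (m := m)) := by
  refine Matrix.measurable_of_apply fun β γ => ?_
  obtain ⟨c, hc⟩ := exists_liftMat_apply_eq_sum γ
  simp_rw [hc]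
  exact Finset.measurable_sum _ fun z _ => ((measurable_pi_apply β).comp
    (measurable_mLift.comp (measurable_id.matrix_mulVec measurable_const))).const_mul _

lemma exists_abs_liftMat_apply_le (β γ : MultiIdx n m) :
    ∃ D, ∀ A, |liftMat A β γ| ≤ D * ‖A‖ ^ m := by
  obtain ⟨c, hc⟩ := exists_liftMat_apply_eq_sum γ
  refine ⟨c.sum fun z a => |a| * (√(Nat.multinomial Finset.univ β.1 : ℝ) * euclNorm z ^ m),
    fun A => ?_⟩
  rw [hc, Finsupp.sum, Finsupp.sum, Finset.sum_mul]
  refine (Finset.abs_sum_le_sum_abs _ _).trans (Finset.sum_le_sum fun z _ => ?_)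
  rw [abs_mul, mul_assoc]
  gcongr
  calc |mLift n m (A *ᵥ z) β|
      ≤ √(Nat.multinomial Finset.univ β.1 : ℝ) * euclNorm (A *ᵥ z) ^ m := abs_mLift_le _ _
    _ ≤ √(Nat.multinomial Finset.univ β.1 : ℝ) * (‖A‖ * euclNorm z) ^ m := by
        gcongr
        · exact Real.sqrt_nonneg _
        · exact euclNorm_mulVec_le A z
    _ = _ := by ring

end LiftBounds

section SpectralRadius

open Filter

variable {A : Type*} [NormedRing A] [NormedAlgebra ℂ A] [CompleteSpace A]

lemma eventually_norm_pow_le_of_spectralRadius_lt {a : A} {r : NNReal}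
    (h : spectralRadius ℂ a < r) : ∀ᶠ k in atTop, ‖a ^ k‖ ≤ (r : ℝ) ^ k := by
  filter_upwards [(spectrum.gelfand_formula a).eventually_lt_const h, eventually_gt_atTop 0]
    with k hk hk0
  rw [one_div, ENNReal.rpow_inv_lt_iff (by positivity), ENNReal.rpow_natCast] at hk
  exact_mod_cast hk.le

lemma exists_norm_pow_le_mul_pow_of_spectralRadius_lt {a : A} {r : NNReal}
    (h : spectralRadius ℂ a < r) : ∃ C, 0 ≤ C ∧ ∀ k, ‖a ^ k‖ ≤ C * (r : ℝ) ^ k := by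
  have hr : 0 < (r : ℝ) := NNReal.coe_pos.mpr (ENNReal.coe_pos.mp (pos_of_gt h))
  obtain ⟨C, hC⟩ : BddAbove (Set.range fun k => ‖a ^ k‖ / (r : ℝ) ^ k) :=
    IsBoundedUnder.bddAbove_range <| isBoundedUnder_of_eventually_le (a := 1) <| by
      filter_upwards [eventually_norm_pow_le_of_spectralRadius_lt h] with k hk
      exact div_le_one_of_le₀ hk (by positivity)
  refine ⟨C, (by positivity : 0 ≤ ‖a ^ 0‖ / (r : ℝ) ^ 0).trans (hC ⟨0, rfl⟩), fun k => ?_⟩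
  exact (div_le_iff₀ (by positivity)).mp (hC ⟨k, rfl⟩)

end SpectralRadius

theorem exists_abs_pow_apply_le_of_specRad_lt_one {N : Type*} [Fintype N] [DecidableEq N]
    {M : Matrix N N ℝ} (hM : specRad M < 1) :
    ∃ C b : ℝ, 0 ≤ C ∧ 0 < b ∧ ∀ (k : ℕ) i j, |(M ^ k) i j| ≤ C * Real.exp (-b * k) := by
  obtain ⟨r, hr, hr1⟩ := ENNReal.lt_iff_exists_nnreal_btwn.mp hM
  obtain ⟨C, hC0, hC⟩ := exists_norm_pow_le_mul_pow_of_spectralRadius_lt hr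
  have hr0 : 0 < (r : ℝ) := NNReal.coe_pos.mpr (ENNReal.coe_pos.mp (pos_of_gt hr))
  refine ⟨C, -Real.log r, hC0, neg_pos.mpr (Real.log_neg hr0 (by exact_mod_cast hr1)),
    fun k i j => ?_⟩
  rw [neg_neg, ← Real.rpow_def_of_pos hr0, Real.rpow_natCast]
  calc |(M ^ k) i j| = ‖((M.map (algebraMap ℝ ℂ)) ^ k) i j‖ := by
        rw [← RingHom.mapMatrix_apply, ← map_pow]
        simp
    _ ≤ _ := (Matrix.norm_apply_le_l2_opNorm _ i j).trans (hC k)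

section Dynamics

variable {Ω Ω' : Type*} {n : ℕ}

lemma xd_zero (F : ℕ → Ω → Matrix (Fin n) (Fin n) ℝ) (x₀ : Fin n → ℝ) (ω : Ω) :
    xd F x₀ 0 ω = x₀ :=
  Matrix.one_mulVec x₀

lemma xd_succ (F : ℕ → Ω → Matrix (Fin n) (Fin n) ℝ) (x₀ : Fin n → ℝ) (k : ℕ) (ω : Ω) :
    xd F x₀ (k + 1) ω = F k ω *ᵥ xd F x₀ k ω :=
  (Matrix.mulVec_mulVec _ _ _).symm

lemma xd_congr {F : ℕ → Ω → Matrix (Fin n) (Fin n) ℝ} {G : ℕ → Ω' → Matrix (Fin n) (Fin n) ℝ}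
    {x₀ : Fin n → ℝ} {k : ℕ} {ω : Ω} {ω' : Ω'} (h : ∀ j < k, F j ω = G j ω') :
    xd F x₀ k ω = xd G x₀ k ω' := by
  induction k with
  | zero => rw [xd_zero, xd_zero]
  | succ k ih =>
    rw [xd_succ, xd_succ, h k k.lt_succ_self, ih fun j hj => h j (hj.trans k.lt_succ_self)]

lemma measurable_xd [MeasurableSpace Ω] {F : ℕ → Ω → Matrix (Fin n) (Fin n) ℝ}
    (hF : ∀ j, Measurable (F j)) (x₀ : Fin n → ℝ) (k : ℕ) : Measurable (xd F x₀ k) := by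
  induction k with
  | zero => simp_rw [funext (xd_zero F x₀)]; exact measurable_const
  | succ k ih => simp_rw [funext (xd_succ F x₀ k)]; exact (hF k).matrix_mulVec ih

/-- `xd F x₀ k` is a measurable function of `F 0, …, F (k - 1)`, hence independent of `F k`. -/
theorem indepFun_xd [MeasurableSpace Ω] {P : Measure Ω} {F : ℕ → Ω → Matrix (Fin n) (Fin n) ℝ}
    (hind : iIndepFun F P) (hF : ∀ j, AEMeasurable (F j) P) (x₀ : Fin n → ℝ) (k : ℕ) :
    IndepFun (F k) (xd F x₀ k) P := by
  classical
  let G (j : ℕ) (u : Finset.range k → Matrix (Fin n) (Fin n) ℝ) : Matrix (Fin n) (Fin n) ℝ :=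
    if h : j ∈ Finset.range k then u ⟨j, h⟩ else 0
  have hG (j : ℕ) : Measurable (G j) := by
    by_cases h : j ∈ Finset.range k
    · simpa only [G, dif_pos h] using measurable_pi_apply _
    · simpa only [G, dif_neg h] using measurable_const
  have hpair := (hind.indepFun_finset₀ {k} (Finset.range k) (by simp) hF).comp
    (measurable_pi_apply ⟨k, Finset.mem_singleton_self k⟩) (measurable_xd hG x₀ k)
  convert hpair using 1
  · rfl
  · funext ω
    exact xd_congr fun j hj => by simp [G, hj]

end Dynamics

section Moments

variable {Ω : Type*} [MeasurableSpace Ω] {P : Measure Ω}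

lemma integral_dotProduct {N : Type*} [Fintype N] (w : N → ℝ) {v : Ω → N → ℝ}
    (hv : ∀ j, Integrable (fun ω => v ω j) P) :
    ∫ ω, w ⬝ᵥ v ω ∂P = w ⬝ᵥ fun j => ∫ ω, v ω j ∂P := by
  simp only [dotProduct]
  rw [integral_finsetSum _ fun j _ => (hv j).const_mul (w j)]
  simp_rw [integral_const_mul]

theorem integral_mulVec_of_indepFun {N : Type*} [Fintype N] {G : Ω → Matrix N N ℝ}
    {v : Ω → N → ℝ} (hGv : IndepFun G v P) (hG : ∀ i j, Integrable (fun ω => G ω i j) P)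
    (hv : ∀ j, Integrable (fun ω => v ω j) P) :
    (∀ i, Integrable (fun ω => (G ω *ᵥ v ω) i) P) ∧
      (fun i => ∫ ω, (G ω *ᵥ v ω) i ∂P) = matExpVal P G *ᵥ fun j => ∫ ω, v ω j ∂P := by
  have hind (i j : N) : IndepFun (fun ω => G ω i j) (fun ω => v ω j) P :=
    hGv.comp (Matrix.measurable_apply i j) (measurable_pi_apply j)
  have hint (i j : N) : Integrable (fun ω => G ω i j * v ω j) P :=
    (hind i j).integrable_mul (hG i j) (hv j)
  refine ⟨fun i => integrable_finsetSum _ fun j _ => hint i j, funext fun i => ?_⟩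
  simp only [Matrix.mulVec, dotProduct]
  rw [integral_finsetSum _ fun j _ => hint i j]
  exact Finset.sum_congr rfl fun j _ => (hind i j).integral_fun_mul_eq_mul_integral
    (hG i j).aestronglyMeasurable (hv j).aestronglyMeasurable

variable {n m : ℕ}

lemma integrable_liftMat_apply {F₀ : Ω → Matrix (Fin n) (Fin n) ℝ} (hF : AEMeasurable F₀ P)
    (hint : Integrable (fun ω => ‖F₀ ω‖ ^ m) P) (β γ : MultiIdx n m) :
    Integrable (fun ω => liftMat (F₀ ω) β γ) P := by
  obtain ⟨D, hD⟩ := exists_abs_liftMat_apply_le β γ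
  refine (hint.const_mul D).mono' (((Matrix.measurable_apply β γ).comp
    measurable_liftMat).comp_aemeasurable hF).aestronglyMeasurable (ae_of_all _ fun ω => ?_)
  rw [Real.norm_eq_abs]
  exact hD (F₀ ω)

variable [IsProbabilityMeasure P] {F : ℕ → Ω → Matrix (Fin n) (Fin n) ℝ}

theorem integral_mLift_xd (hind : iIndepFun F P) (hid : ∀ k, IdentDistrib (F k) (F 0) P P)
    (hint : ∀ β γ, Integrable (fun ω => liftMat (m := m) (F 0 ω) β γ) P)
    (x₀ : Fin n → ℝ) (k : ℕ) :
    (∀ γ, Integrable (fun ω => mLift n m (xd F x₀ k ω) γ) P) ∧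
      (fun γ => ∫ ω, mLift n m (xd F x₀ k ω) γ ∂P)
        = matExpVal P (fun ω => liftMat (F 0 ω)) ^ k *ᵥ mLift n m x₀ := by
  induction k with
  | zero => simp [xd_zero]
  | succ k ih =>
    have hdist (β γ : MultiIdx n m) : IdentDistrib (fun ω => liftMat (F k ω) β γ)
        (fun ω => liftMat (F 0 ω) β γ) P P :=
      (hid k).comp ((Matrix.measurable_apply β γ).comp measurable_liftMat)
    have hexp : matExpVal P (fun ω => liftMat (F k ω)) = matExpVal P (fun ω => liftMat (F 0 ω)) :=
      Matrix.ext fun β γ => (hdist β γ).integral_eq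
    have hindep := (indepFun_xd hind (fun j => (hid j).aemeasurable_fst) x₀ k).comp
      (measurable_liftMat (m := m)) (measurable_mLift (m := m))
    obtain ⟨hint', heq⟩ := integral_mulVec_of_indepFun (G := fun ω => liftMat (F k ω))
      (v := fun ω => mLift n m (xd F x₀ k ω)) hindep
      (fun β γ => (hdist β γ).integrable_iff.mpr (hint β γ)) ih.1
    simp_rw [xd_succ, mLift_mulVec]
    refine ⟨hint', ?_⟩
    rw [heq, ih.2, hexp, pow_succ', Matrix.mulVec_mulVec]

end Moments

theorem expMeanStable_of_specRad_lt_one_of_even_general {Ω : Type*} [MeasurableSpace Ω]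
    (P : Measure Ω) [IsProbabilityMeasure P] (n m : ℕ)
    (F : ℕ → Ω → Matrix (Fin n) (Fin n) ℝ)
    (hind : iIndepFun F P)
    (hid : ∀ k, IdentDistrib (F k) (F 0) P P)
    (hint : Integrable (fun ω => ‖F 0 ω‖ ^ m) P)
    (L : Ω → Matrix {α : Fin n → ℕ // ∑ i, α i = m} {α : Fin n → ℕ // ∑ i, α i = m} ℝ)
    (hL : ∀ ω, IsMatrixLift n m (F 0 ω) (L ω))
    (heven : Even m) (hschur : specRad (matExpVal P L) < 1) :
    ExpMeanStable P F m := by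
  obtain ⟨w, hw⟩ := exists_euclNorm_pow_eq_dotProduct_mLift (n := n) heven
  obtain rfl : L = fun ω => liftMat (F 0 ω) := funext fun ω => (hL ω).eq_liftMat
  obtain ⟨C, b, hC, hb, hpow⟩ := exists_abs_pow_apply_le_of_specRad_lt_one hschur
  set W := ∑ α, |w α|
  set Z := ∑ α : MultiIdx n m, √(Nat.multinomial Finset.univ α.1 : ℝ)
  refine ⟨max (W * C * Z) 1, by positivity, b, hb, fun x₀ k => ?_⟩
  obtain ⟨hmom, hmean⟩ :=
    integral_mLift_xd hind hid (integrable_liftMat_apply (hid 0).aemeasurable_fst hint) x₀ k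
  calc ∫ ω, euclNorm (xd F x₀ k ω) ^ m ∂P
      = w ⬝ᵥ (matExpVal P (fun ω => liftMat (F 0 ω)) ^ k *ᵥ mLift n m x₀) := by
        simp_rw [hw]
        rw [integral_dotProduct w hmom, hmean]
    _ ≤ W * (C * Real.exp (-b * k)) * (Z * euclNorm x₀ ^ m) :=
        (le_abs_self _).trans <| (abs_dotProduct_mulVec_le w _ (hpow k)).trans <| by
          gcongr
          exact sum_abs_mLift_le x₀
    _ = W * C * Z * Real.exp (-b * k) * euclNorm x₀ ^ m := by ring
    _ ≤ max (W * C * Z) 1 * Real.exp (-b * k) * euclNorm x₀ ^ m := by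
        gcongr
        · exact pow_nonneg (euclNorm_nonneg x₀) m
        · exact le_max_left _ _

/-- If `m` is even and the spectral radius of `E[F₀^[m]]` is less than
one, then the system `Σ_μ` is exponentially `m`th mean stable. -/
theorem expMeanStable_of_specRad_lt_one_of_even {Ω : Type*} [MeasurableSpace Ω]
    (P : Measure Ω) [IsProbabilityMeasure P] (n m : ℕ) (hm : 0 < m)
    (F : ℕ → Ω → Matrix (Fin n) (Fin n) ℝ)
    (hind : iIndepFun F P)
    (hid : ∀ k, IdentDistrib (F k) (F 0) P P)
    (hint : Integrable (fun ω => ‖F 0 ω‖ ^ m) P)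
    (L : Ω → Matrix {α : Fin n → ℕ // ∑ i, α i = m} {α : Fin n → ℕ // ∑ i, α i = m} ℝ)
    (hL : ∀ ω, IsMatrixLift n m (F 0 ω) (L ω))
    (heven : Even m) (hschur : specRad (matExpVal P L) < 1) :
    ExpMeanStable P F m :=
  expMeanStable_of_specRad_lt_one_of_even_general P n m F hind hid hint L hL heven hschur
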